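/- arXiv:cs/0512082 — 6 statements merged into one kernel-verified Lean document; each statement's English description precedes it below -/
import Mathlib

section
/- (Variant Theorem) Let f : P(u) → P(u) be a conjunctive (binary-intersection-preserving) monotone set transformer, V : u → ℕ, v(n) = {z ∈ u | V(z) = n}, v'(n) = {z ∈ u | V(z) < n}, and p ⊆ u. If for every n ∈ ℕ we have v(n) ∩ p ⊆ f(v'(n)), and p ⊆ f(p), then p ⊆ lfp(f). -/
open Set

theorem stmt4 {σ : Type*} (f : Set σ → Set σ) (hf : Monotone f)
    (hconj : ∀ a b : Set σ, f (a ∩ b) = f a ∩ f b)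
    (V : σ → ℕ) (p : Set σ)
    (h1 : ∀ n : ℕ, {z | V z = n} ∩ p ⊆ f {z | V z < n})
    (h2 : p ⊆ f p) :
    p ⊆ OrderHom.lfp ⟨f, hf⟩ := by
  have key : ∀ n : ℕ, {z | V z = n} ∩ p ⊆ OrderHom.lfp ⟨f, hf⟩ := by
    intro n
    induction n using Nat.strong_induction_on with
    | _ n ih =>
      have hsub : {z | V z < n} ∩ p ⊆ OrderHom.lfp ⟨f, hf⟩ := by
        rintro z ⟨hz, hzp⟩
        exact ih (V z) hz ⟨rfl, hzp⟩
      intro z hz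
      have h3 : z ∈ f {z | V z < n} := h1 n hz
      have h4 : z ∈ f p := h2 hz.2
      have h5 : z ∈ f ({z | V z < n} ∩ p) := by
        rw [hconj]; exact ⟨h3, h4⟩
      have h6 : f ({z | V z < n} ∩ p) ⊆ f (OrderHom.lfp ⟨f, hf⟩) := hf hsub
      have h7 : f (OrderHom.lfp ⟨f, hf⟩) = OrderHom.lfp ⟨f, hf⟩ :=
        OrderHom.map_lfp ⟨f, hf⟩
      rw [← h7]
      exact h6 h5
  intro z hz
  exact key (V z) ⟨rfl, hz⟩
end

section
/- Under the hypotheses of the Variant Theorem (f conjunctive, v(n) ∩ p ⊆ f(v'(n)) for all n, and p ⊆ f(p)), for every natural number n: (⋃_{i ≤ n} v(i)) ∩ p ⊆ f^{n+1}, where f^{n+1} denotes the (n+1)-st transfinite iterate of f. -/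
open Set

noncomputable def iterOrd {σ : Type*} (f : Set σ → Set σ) (o : Ordinal) : Set σ :=
  ⋃ b : Set.Iio o, f (iterOrd f b.1)
termination_by o
decreasing_by exact b.2

lemma iterOrd_mono {σ : Type*} (f : Set σ → Set σ) {o o' : Ordinal} (h : o ≤ o') :
    iterOrd f o ⊆ iterOrd f o' := by
  rw [iterOrd, iterOrd]
  rintro x hx
  simp only [mem_iUnion] at hx ⊢
  obtain ⟨⟨b, hb⟩, hxb⟩ := hx
  exact ⟨⟨b, lt_of_lt_of_le hb h⟩, hxb⟩

lemma f_step {σ : Type*} (f : Set σ → Set σ) {o : Ordinal} :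
    f (iterOrd f o) ⊆ iterOrd f (o + 1) := by
  conv_rhs => rw [iterOrd]
  intro x hx
  simp only [mem_iUnion]
  exact ⟨⟨o, by simp⟩, hx⟩

theorem stmt7 {σ : Type*} (f : Set σ → Set σ)
    (hconj : ∀ a b : Set σ, f (a ∩ b) = f a ∩ f b)
    (V : σ → ℕ) (p : Set σ)
    (h1 : ∀ n : ℕ, {z | V z = n} ∩ p ⊆ f {z | V z < n})
    (h2 : p ⊆ f p) (n : ℕ) :
    (⋃ i ≤ n, {z | V z = i}) ∩ p ⊆ iterOrd f ((n : Ordinal) + 1) := by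
  have hmono : ∀ a b : Set σ, a ⊆ b → f a ⊆ f b := by
    intro a b hab
    have : a ∩ b = a := inter_eq_left.mpr hab
    calc f a = f (a ∩ b) := by rw [this]
    _ = f a ∩ f b := hconj a b
    _ ⊆ f b := inter_subset_right
  have key : ∀ m : ℕ, {z | V z < m} ∩ p ⊆ iterOrd f (m : Ordinal) := by
    intro m
    induction m with
    | zero => intro z hz; simp at hz
    | succ k ih =>
      intro z ⟨hz1, hz2⟩
      have hcast : ((k + 1 : ℕ) : Ordinal) = (k : Ordinal) + 1 := by push_cast; ring
      rw [hcast]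
      rcases Nat.lt_succ_iff_lt_or_eq.mp hz1 with h | h
      · exact iterOrd_mono f (le_of_lt (by exact_mod_cast Nat.lt_succ_self k))
          (ih ⟨h, hz2⟩)
      · have : z ∈ f ({z | V z < k} ∩ p) := by
          rw [hconj]
          exact ⟨h1 k ⟨h, hz2⟩, h2 hz2⟩
        exact f_step f (hmono _ _ (ih) this)
  intro z ⟨hz1, hz2⟩
  simp only [mem_iUnion] at hz1
  obtain ⟨i, hi, hzi⟩ := hz1
  have : z ∈ {z | V z < n + 1} ∩ p := ⟨by have : V z = i := hzi; simp only [mem_setOf_eq]; omega, hz2⟩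
  have := key (n + 1) this
  rwa [show ((n + 1 : ℕ) : Ordinal) = (n : Ordinal) + 1 by push_cast; ring] at this
end

section
/- Define the termination relation T = { (a,b) | a,b ⊆ u and a ⊆ lfp(F(b)) } where F(b)(s) = b ∪ W(s) for a monotone strict W. Then T is transitive: if (a,c) ∈ T and (c,b) ∈ T then (a,b) ∈ T. -/
open Set

def guarded {σ : Type*} (W : Set σ → Set σ) (hW : Monotone W) (r : Set σ) :
    Set σ →o Set σ :=
  ⟨fun s => r ∪ W s, fun _ _ h => Set.union_subset_union_right _ (hW h)⟩

theorem stmt8 {σ : Type*} (W : Set σ → Set σ) (hW : Monotone W) (hstrict : W ∅ = ∅)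
    (a b c : Set σ)
    (hac : a ⊆ OrderHom.lfp (guarded W hW c))
    (hcb : c ⊆ OrderHom.lfp (guarded W hW b)) :
    a ⊆ OrderHom.lfp (guarded W hW b) := by
  refine hac.trans (OrderHom.lfp_le _ ?_)
  show c ∪ W (OrderHom.lfp (guarded W hW b)) ⊆ _
  refine Set.union_subset hcb ?_
  conv_rhs => rw [← OrderHom.map_lfp (guarded W hW b)]
  exact Set.subset_union_right
end

section
/- (Soundness and Completeness) Let W : P(u) → P(u) be monotone and strict, F(r)(s) = r ∪ W(s), T = { (a,b) | a ⊆ lfp(F(b)) }. Let E ⊆ P(u)×P(u) be a relation satisfying: (a) (a,b) ∈ E implies a ∩ bᶜ ⊆ W(b); (b) a ⊆ b implies (a,b) ∈ E. Let L be the smallest relation on P(u) containing E that is transitive and closed under arbitrary disjunction (if (p,q) ∈ L for all p in a family l then (⋃l, q) ∈ L), and suppose additionally (c) (W(r), r) ∈ L for all r ⊆ u. Then L = T. -/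
open Set

inductive Reach {σ : Type*} (E : Set σ → Set σ → Prop) : Set σ → Set σ → Prop
  | base {a b : Set σ} : E a b → Reach E a b
  | trans {a c b : Set σ} : Reach E a c → Reach E c b → Reach E a b
  | disj {l : Set (Set σ)} {q : Set σ} : (∀ p ∈ l, Reach E p q) → Reach E (⋃₀ l) q

theorem stmt11 {σ : Type*} (W : Set σ → Set σ) (hW : Monotone W) (hstrict : W ∅ = ∅)
    (E : Set σ → Set σ → Prop)
    (ha : ∀ a b : Set σ, E a b → a ∩ bᶜ ⊆ W b)
    (hb : ∀ a b : Set σ, a ⊆ b → E a b)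
    (hc : ∀ r : Set σ, Reach E (W r) r) :
    ∀ a b : Set σ, Reach E a b ↔ a ⊆ OrderHom.lfp (guarded W hW b) := by
  have hfix : ∀ b : Set σ, b ∪ W (OrderHom.lfp (guarded W hW b))
      = OrderHom.lfp (guarded W hW b) := by
    intro b
    exact OrderHom.map_lfp (guarded W hW b)
  have hbsub : ∀ b : Set σ, b ⊆ OrderHom.lfp (guarded W hW b) := by
    intro b
    conv_rhs => rw [← hfix b]
    exact subset_union_left
  have hWsub : ∀ b : Set σ, W (OrderHom.lfp (guarded W hW b)) ⊆ OrderHom.lfp (guarded W hW b) := by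
    intro b
    conv_rhs => rw [← hfix b]
    exact subset_union_right
  intro a b
  constructor
  · intro h
    induction h with
    | base hE =>
        rename_i a b
        intro x hx
        by_cases hxb : x ∈ b
        · exact hbsub b hxb
        · exact hWsub b (hW (hbsub b) (ha a b hE ⟨hx, hxb⟩))
    | trans h1 h2 ih1 ih2 =>
        exact ih1.trans (OrderHom.lfp_le _ (union_subset ih2 (hWsub _)))
    | disj h ih =>
        exact sUnion_subset ih
  · intro h
    set m := ⋃₀ {s : Set σ | s ⊆ OrderHom.lfp (guarded W hW b) ∧ Reach E s b} with hm
    have hmsub : m ⊆ OrderHom.lfp (guarded W hW b) := sUnion_subset fun s hs => hs.1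
    have hmb : Reach E m b := Reach.disj fun p hp => hp.2
    have hlm : OrderHom.lfp (guarded W hW b) ⊆ m := by
      refine OrderHom.lfp_le _ ?_
      refine union_subset ?_ ?_
      · exact subset_sUnion_of_mem ⟨hbsub b, Reach.base (hb b b subset_rfl)⟩
      · exact subset_sUnion_of_mem ⟨(hW hmsub).trans (hWsub b),
          Reach.trans (hc m) hmb⟩
    exact Reach.trans (Reach.base (hb a m (h.trans hlm))) hmb
end

section
/- For any monotone strict W and F(r) defined by F(r)(s) = r ∪ W(s), and L the inductively defined reachability relation containing a base relation E with properties (b) a ⊆ b ⟹ (a,b) ∈ E and (c) (W(r), r) ∈ L, one has for every ordinal α and every r ⊆ u: (F(r)^α, r) ∈ L, where F(r)^α is the transfinite iterate. -/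
open Set

theorem stmt12 {σ : Type*} (W : Set σ → Set σ) (hW : Monotone W) (hstrict : W ∅ = ∅)
    (E L : Set σ → Set σ → Prop)
    (hEL : ∀ a b : Set σ, E a b → L a b)
    (htrans : ∀ a c b : Set σ, L a c → L c b → L a b)
    (hdisj : ∀ (l : Set (Set σ)) (q : Set σ), (∀ p ∈ l, L p q) → L (⋃₀ l) q)
    (hb : ∀ a b : Set σ, a ⊆ b → E a b)
    (hc : ∀ r : Set σ, L (W r) r) :
    ∀ (α : Ordinal) (r : Set σ), L (iterOrd (fun s => r ∪ W s) α) r := by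
  intro α
  induction α using Ordinal.induction with
  | h α ih =>
    intro r
    rw [iterOrd]
    have hrange : (⋃ b : Set.Iio α, (fun s => r ∪ W s) (iterOrd (fun s => r ∪ W s) b.1))
        = ⋃₀ (Set.range (fun b : Set.Iio α => r ∪ W (iterOrd (fun s => r ∪ W s) b.1))) := by
      rw [Set.sUnion_range]
    rw [hrange]
    apply hdisj
    rintro p ⟨b, rfl⟩
    have h1 : L (W (iterOrd (fun s => r ∪ W s) b.1)) r :=
      htrans _ _ _ (hc _) (ih b.1 b.2 r)
    show L (r ∪ W (iterOrd (fun s => r ∪ W s) b.1)) r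
    have h2 : r ∪ W (iterOrd (fun s => r ∪ W s) b.1) = ⋃₀ {r, W (iterOrd (fun s => r ∪ W s) b.1)} := by
      simp
    rw [h2]
    apply hdisj
    rintro q hq
    rcases hq with rfl | rfl
    · exact hEL _ _ (hb _ _ (subset_refl _))
    · exact h1
end

section
/- Under weak fairness, if (a,b) ∈ E'_w(G), i.e., a ∩ bᶜ ⊆ S(a ∪ b) ∩ grd(G) ∩ G(b), then a ⊆ Y(b)(G)(b), where Y(b)(G)(b) = gfp(s ↦ b ∪ (grd(G) ∩ G(b) ∩ S(s))). -/
open Set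

def fairLoop {σ : Type*} (S : Set σ → Set σ) (hS : Monotone S)
    (G : Set σ → Set σ) (q r : Set σ) : Set σ :=
  OrderHom.gfp ⟨fun s => q ∪ ((G ∅)ᶜ ∩ G r ∩ S s),
    fun _ _ h => Set.union_subset_union_right _ (Set.inter_subset_inter_right _ (hS h))⟩

theorem stmt18 {σ : Type*} (S G : Set σ → Set σ) (hS : Monotone S) (hG : Monotone G)
    (a b : Set σ) (h : a ∩ bᶜ ⊆ S (a ∪ b) ∩ (G ∅)ᶜ ∩ G b) :
    a ⊆ fairLoop S hS G b b := by
  have key : a ∪ b ⊆ fairLoop S hS G b b := by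
    apply OrderHom.le_gfp
    intro x hx
    show x ∈ b ∪ ((G ∅)ᶜ ∩ G b ∩ S (a ∪ b))
    by_cases hb : x ∈ b
    · exact Or.inl hb
    · rcases hx with ha | hb'
      · have := h ⟨ha, hb⟩
        exact Or.inr ⟨⟨this.1.2, this.2⟩, this.1.1⟩
      · exact absurd hb' hb
  exact fun x hx => key (Or.inl hx)
end
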